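/- Let q > 1 be real, n ∈ ℕ, and c > 0 real. Then (q^{4n−2};q^{−4})_∞ · (−q^{4n−4} c^{−1};q^{−4})_∞ · (−q^{−4n} c;q^{−4})_∞ = (−c)^{−n} q^{4n²−2n} (q^{−2};q^{−4})_n · (q^{−2};q^{−4})_∞ · (−c;q^{−4})_∞ · (−c^{−1} q^{−4};q^{−4})_∞. (This evaluates the coefficient C_e of the even-series expansion at the Fock points ε = −q^{−4n}, showing C_e = (−c)^{−n} q^{4n²−2n} (q^{−2};q^{−4})_n.) -/

import Mathlib

/-!
Split each infinite product after `n` factors, `(a;p)_∞ = (a;p)_n (a pⁿ;p)_∞`, with `p = q⁻⁴`.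
The tails of the two first factors on the left are `(q⁻²;p)_∞` and `(-c⁻¹q⁻⁴;p)_∞`, and
`(-c;p)_∞` on the right splits into `(-c;p)_n` and the third factor on the left. What remains is
an identity of finite products, which follows from reversing the order of the factors,
`(a pⁿ;p⁻¹)_n = (a p;p)_n`, and from pulling `-x` out of every factor `1 - x`,
`(a;p)_n = (-a)ⁿ p^(n choose 2) (a⁻¹;p⁻¹)_n`.
-/

open scoped BigOperators

/-- The q-shifted factorial `(a;p)_n = ∏_{i=0}^{n-1} (1 - a p^i)`. -/
noncomputable def qPoch (a p : ℂ) (n : ℕ) : ℂ :=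
  ∏ i ∈ Finset.range n, (1 - a * p ^ i)

/-- The infinite q-shifted factorial `(a;p)_∞ = ∏_{i=0}^∞ (1 - a p^i)`. -/
noncomputable def qPochInf (a p : ℂ) : ℂ :=
  ∏' i : ℕ, (1 - a * p ^ i)

open Finset

theorem qPoch_succ (a p : ℂ) (n : ℕ) : qPoch a p (n + 1) = qPoch a p n * (1 - a * p ^ n) :=
  prod_range_succ _ _

theorem multipliable_one_sub_mul_pow {p : ℂ} (hp : ‖p‖ < 1) (a : ℂ) :
    Multipliable fun i : ℕ => 1 - a * p ^ i := by
  have hsum : Summable fun i : ℕ => ‖-(a * p ^ i)‖ := by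
    simp only [norm_neg, norm_mul, norm_pow]
    exact (summable_geometric_of_lt_one (norm_nonneg p) hp).mul_left ‖a‖
  simpa only [sub_eq_add_neg] using multipliable_one_add_of_summable hsum

theorem qPochInf_eq_qPoch_mul {p : ℂ} (hp : ‖p‖ < 1) (a : ℂ) (n : ℕ) :
    qPochInf a p = qPoch a p n * qPochInf (a * p ^ n) p := by
  have hshift (i : ℕ) : 1 - a * p ^ (i + n) = 1 - a * p ^ n * p ^ i := by
    rw [pow_add]; ring
  have hm : Multipliable fun i : ℕ => 1 - a * p ^ (i + n) := by
    simpa only [hshift] using multipliable_one_sub_mul_pow hp (a * p ^ n)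
  rw [qPochInf, qPochInf, qPoch,
    ← Multipliable.prod_mul_tprod_nat_mul' (f := fun i => 1 - a * p ^ i) hm]
  simp only [hshift]

theorem qPoch_mul_pow_inv {p : ℂ} (hp : p ≠ 0) (a : ℂ) (n : ℕ) :
    qPoch (a * p ^ n) p⁻¹ n = qPoch (a * p) p n := by
  rw [qPoch, qPoch, ← prod_range_reflect]
  refine prod_congr rfl fun i hi => ?_
  obtain ⟨k, rfl⟩ : ∃ k, n = k + i + 1 := ⟨n - (i + 1), by have := mem_range.1 hi; omega⟩
  rw [show k + i + 1 - 1 - i = k by omega, inv_pow]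
  field_simp
  ring

theorem qPoch_eq_neg_pow_mul_qPoch_inv {a p : ℂ} (ha : a ≠ 0) (hp : p ≠ 0) (n : ℕ) :
    qPoch a p n = (-a) ^ n * p ^ n.choose 2 * qPoch a⁻¹ p⁻¹ n := by
  induction n with
  | zero => simp [qPoch]
  | succ n ih =>
    rw [qPoch_succ, qPoch_succ, ih, Nat.choose_succ_succ', Nat.choose_one_right, inv_pow]
    field_simp
    ring

theorem qPoch_fock_pair {Q c : ℂ} (hQ : Q ≠ 0) (hc : c ≠ 0) (n : ℕ) :
    qPoch (Q ^ (4 * (n : ℤ) - 2)) (Q ^ (-4 : ℤ)) n *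
      qPoch (-Q ^ (4 * (n : ℤ) - 4) * c⁻¹) (Q ^ (-4 : ℤ)) n =
    (-c) ^ (-(n : ℤ)) * Q ^ (4 * (n : ℤ) ^ 2 - 2 * (n : ℤ)) *
      qPoch (Q ^ (-2 : ℤ)) (Q ^ (-4 : ℤ)) n * qPoch (-c) (Q ^ (-4 : ℤ)) n := by
  have hP : Q ^ 4 ≠ 0 := pow_ne_zero 4 hQ
  have hzpow (k : ℕ) : Q ^ (-(k : ℤ)) = (Q ^ k)⁻¹ := by rw [zpow_neg, zpow_natCast]
  have hPn : (Q ^ 4) ^ n = Q ^ (4 * (n : ℤ)) := by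
    rw [← pow_mul, ← zpow_natCast]; push_cast; rfl
  have hA : Q ^ (4 * (n : ℤ) - 2) = (Q ^ 2)⁻¹ * (Q ^ 4) ^ n := by
    rw [hPn, ← hzpow, ← zpow_add₀ hQ]; congr 1
  have hB : -Q ^ (4 * (n : ℤ) - 4) * c⁻¹ = -c⁻¹ * (Q ^ 4)⁻¹ * (Q ^ 4) ^ n := by
    rw [hPn, ← hzpow, sub_eq_add_neg, zpow_add₀ hQ]; push_cast; ring
  have hbase : Q ^ (-4 : ℤ) = (Q ^ 4)⁻¹ := hzpow 4
  have hQ2 : Q ^ (-2 : ℤ) = (Q ^ 2)⁻¹ := hzpow 2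
  rw [hA, hB, hbase, hQ2, qPoch_mul_pow_inv hP, qPoch_mul_pow_inv hP,
    show (Q ^ 2)⁻¹ * Q ^ 4 = Q ^ 2 by field_simp, inv_mul_cancel_right₀ hP,
    qPoch_eq_neg_pow_mul_qPoch_inv (pow_ne_zero 2 hQ) hP,
    qPoch_eq_neg_pow_mul_qPoch_inv (neg_ne_zero.2 (inv_ne_zero hc)) hP, inv_neg, inv_inv]
  have hchoose : 4 * (n : ℤ) ^ 2 - 2 * n = ((2 * n + 8 * n.choose 2 : ℕ) : ℤ) := by
    have h := Nat.cast_choose_two ℚ n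
    qify
    linear_combination -8 * h
  have hcoef : (-Q ^ 2) ^ n * (Q ^ 4) ^ n.choose 2 * ((- -c⁻¹) ^ n * (Q ^ 4) ^ n.choose 2) =
      (-c) ^ (-(n : ℤ)) * Q ^ (4 * (n : ℤ) ^ 2 - 2 * (n : ℤ)) := by
    rw [hchoose, zpow_natCast, zpow_neg, zpow_natCast, neg_neg, neg_pow, neg_pow c, inv_pow,
      pow_add, pow_mul, pow_mul]
    field_simp
    ring_nf
    simp
  rw [← hcoef]
  ring

/-- Evaluation of the coefficient `C_e` at the Fock points `ε = -q^{-4n}`: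
`(q^{4n-2};q⁻⁴)_∞ (-q^{4n-4}c⁻¹;q⁻⁴)_∞ (-q^{-4n}c;q⁻⁴)_∞
  = (-c)^{-n} q^{4n²-2n} (q⁻²;q⁻⁴)_n (q⁻²;q⁻⁴)_∞ (-c;q⁻⁴)_∞ (-c⁻¹q⁻⁴;q⁻⁴)_∞`. -/
theorem Ce_fock_evaluation (q : ℝ) (hq : 1 < q) (n : ℕ) (c : ℝ) (hc : 0 < c) :
    qPochInf ((q : ℂ) ^ (4 * (n : ℤ) - 2)) ((q : ℂ) ^ (-4 : ℤ)) *
      qPochInf (-(q : ℂ) ^ (4 * (n : ℤ) - 4) * (c : ℂ)⁻¹) ((q : ℂ) ^ (-4 : ℤ)) *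
      qPochInf (-(q : ℂ) ^ (-(4 * (n : ℤ))) * (c : ℂ)) ((q : ℂ) ^ (-4 : ℤ)) =
    (-(c : ℂ)) ^ (-(n : ℤ)) * (q : ℂ) ^ (4 * (n : ℤ) ^ 2 - 2 * (n : ℤ)) *
      qPoch ((q : ℂ) ^ (-2 : ℤ)) ((q : ℂ) ^ (-4 : ℤ)) n *
      qPochInf ((q : ℂ) ^ (-2 : ℤ)) ((q : ℂ) ^ (-4 : ℤ)) *
      qPochInf (-(c : ℂ)) ((q : ℂ) ^ (-4 : ℤ)) *
      qPochInf (-(c : ℂ)⁻¹ * (q : ℂ) ^ (-4 : ℤ)) ((q : ℂ) ^ (-4 : ℤ)) := by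
  set Q : ℂ := (q : ℂ)
  have hQ : Q ≠ 0 := Complex.ofReal_ne_zero.2 (by linarith)
  have hp : ‖Q ^ (-4 : ℤ)‖ < 1 := by
    rw [norm_zpow, Complex.norm_real, Real.norm_of_nonneg (by linarith)]
    exact zpow_lt_one_of_neg₀ hq (by norm_num)
  have hpow : (Q ^ (-4 : ℤ)) ^ n = Q ^ (-(4 * (n : ℤ))) := by
    rw [← zpow_natCast, ← zpow_mul, neg_mul]
  have hA : Q ^ (4 * (n : ℤ) - 2) * (Q ^ (-4 : ℤ)) ^ n = Q ^ (-2 : ℤ) := by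
    rw [hpow, ← zpow_add₀ hQ]; congr 1; ring
  have hB : -Q ^ (4 * (n : ℤ) - 4) * (c : ℂ)⁻¹ * (Q ^ (-4 : ℤ)) ^ n
      = -(c : ℂ)⁻¹ * Q ^ (-4 : ℤ) := by
    have h : Q ^ (4 * (n : ℤ) - 4) * Q ^ (-(4 * (n : ℤ))) = Q ^ (-4 : ℤ) := by
      rw [← zpow_add₀ hQ]; congr 1; ring
    rw [hpow]; linear_combination (-(c : ℂ)⁻¹) * h
  have hC : -(c : ℂ) * (Q ^ (-4 : ℤ)) ^ n = -Q ^ (-(4 * (n : ℤ))) * c := by rw [hpow]; ring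
  rw [qPochInf_eq_qPoch_mul hp (Q ^ (4 * (n : ℤ) - 2)) n,
    qPochInf_eq_qPoch_mul hp (-Q ^ (4 * (n : ℤ) - 4) * (c : ℂ)⁻¹) n,
    qPochInf_eq_qPoch_mul hp (-(c : ℂ)) n, hA, hB, hC]
  linear_combination
    qPochInf (Q ^ (-2 : ℤ)) (Q ^ (-4 : ℤ)) * qPochInf (-(c : ℂ)⁻¹ * Q ^ (-4 : ℤ)) (Q ^ (-4 : ℤ)) *
      qPochInf (-Q ^ (-(4 * (n : ℤ))) * c) (Q ^ (-4 : ℤ)) *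
      qPoch_fock_pair hQ (Complex.ofReal_ne_zero.2 hc.ne') n
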